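/- arXiv:2308.11061 — 3 statements merged into one kernel-verified Lean document; each statement's English description precedes it below -/
import Mathlib

section
/- Define C = Z − (q·A·B − q^{−1}·B·A)/(q² − q^{−2}). Then the ℤ₃-symmetric universal Askey–Wilson relations hold: A + (q·B·C − q^{−1}·C·B)/(q² − q^{−2}) = Z and B + (q·C·A − q^{−1}·A·C)/(q² − q^{−2}) = Z. -/
/-! Both relations come from one identity for `P = ∑ ϑₖ • Fₖ`, a `Q` that is tridiagonal with
respect to the `Fₖ`, and the `Z` of the hypotheses: with `s = q² - q⁻²` and `β = q² + q⁻²`,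
`s² Q + s (q P Z - q⁻¹ Z P) - β P Q P + P² Q + Q P² = s² Z`.
It is checked block by block. `Fᵢ (⋯) Fⱼ` is `s² - β ϑᵢ ϑⱼ + ϑᵢ² + ϑⱼ²` times `Fᵢ Q Fⱼ` plus a
multiple of `Fᵢ Z Fⱼ`; for `|i - j| = 1` the scalar vanishes because `ϑᵢ = x + x⁻¹` and
`ϑᵢ₊₁ = x q² + (x q²)⁻¹`, and on the diagonal `Fᵢ Z Fᵢ = (1 + ϑᵢ / (q + q⁻¹)) Fᵢ Q Fᵢ` balances it.
Expanding `C`, the first relation is `s⁻²` times the identity for `(P, Q) = (B, A)`; the second is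
the same computation in the opposite algebra for `(P, Q) = (A, B)`, legitimate since `A` commutes
with `Z`. -/

open Matrix Finset

theorem add_inv_sq_add_mul_add_inv_sq {K : Type*} [Field K] {x p : K} (hx : x ≠ 0) (hp : p ≠ 0) :
    (x + x⁻¹) ^ 2 + (x * p + (x * p)⁻¹) ^ 2 + (p - p⁻¹) ^ 2
      = (p + p⁻¹) * (x + x⁻¹) * (x * p + (x * p)⁻¹) := by
  field_simp; ring

theorem askeyWilson_diagonal_identity {K : Type*} [Field K] {q t : K} (hq : q ≠ 0)
    (ht : q + q⁻¹ ≠ 0) :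
    (q ^ 2 - q⁻¹ ^ 2) ^ 2 - (q ^ 2 + q⁻¹ ^ 2 - 2) * t ^ 2
      = (q ^ 2 - q⁻¹ ^ 2) * (q ^ 2 - q⁻¹ ^ 2 - (q - q⁻¹) * t) * (1 + t / (q + q⁻¹)) := by
  have hsq : q ^ 2 + q⁻¹ ^ 2 - 2 = (q - q⁻¹) ^ 2 := by
    linear_combination 2 * mul_inv_cancel₀ hq
  rw [hsq, show q ^ 2 - q⁻¹ ^ 2 = (q + q⁻¹) * (q - q⁻¹) by ring]
  generalize q + q⁻¹ = u at ht ⊢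
  field_simp
  ring

theorem theta_sq_add_theta_sq_of_adjacent {K : Type*} [Field K] {q a : K} (hq : q ≠ 0)
    (ha : a ≠ 0) {D : ℤ} {ϑ : ℤ → K}
    (hϑ : ∀ i : ℤ, ϑ i = a * q ^ (2 * i - D) + a⁻¹ * q ^ (D - 2 * i))
    {i j : ℤ} (hij : |i - j| = 1) :
    ϑ i ^ 2 + ϑ j ^ 2 + (q ^ 2 - q⁻¹ ^ 2) ^ 2 = (q ^ 2 + q⁻¹ ^ 2) * ϑ i * ϑ j := by
  set x : ℤ → K := fun i => a * q ^ (2 * i - D)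
  have hx (i : ℤ) : x i ≠ 0 := mul_ne_zero ha (zpow_ne_zero _ hq)
  have hϑx (i : ℤ) : ϑ i = x i + (x i)⁻¹ := by
    rw [hϑ, mul_inv, ← _root_.zpow_neg, neg_sub]
  have hx_succ (i : ℤ) : x (i + 1) = x i * q ^ 2 := by
    simp only [x, mul_assoc, ← zpow_natCast, ← zpow_add₀ hq]
    ring_nf
  have hsucc (i : ℤ) :
      ϑ i ^ 2 + ϑ (i + 1) ^ 2 + (q ^ 2 - q⁻¹ ^ 2) ^ 2
        = (q ^ 2 + q⁻¹ ^ 2) * ϑ i * ϑ (i + 1) := by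
    rw [hϑx, hϑx, hx_succ, inv_pow]
    exact add_inv_sq_add_mul_add_inv_sq (hx i) (pow_ne_zero 2 hq)
  rcases abs_eq (zero_le_one' ℤ) |>.mp hij with h | h
  · obtain rfl : i = j + 1 := by omega
    linear_combination hsucc j
  · obtain rfl : j = i + 1 := by omega
    exact hsucc i

theorem sq_sub_inv_sq_ne_zero {K : Type*} [Field K] {q : K} (hq : q ≠ 0) (hq1 : q ^ 2 ≠ 1)
    (hq2 : q ^ 2 ≠ -1) : q ^ 2 - q⁻¹ ^ 2 ≠ 0 := by
  intro h
  have : (q ^ 2 - 1) * (q ^ 2 + 1) = 0 := by field_simp at h; linear_combination h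
  rcases mul_eq_zero.mp this with h | h
  exacts [hq1 (sub_eq_zero.mp h), hq2 (eq_neg_of_add_eq_zero_left h)]

theorem add_inv_ne_zero {K : Type*} [Field K] {q : K} (hq : q ≠ 0) (hq2 : q ^ 2 ≠ -1) :
    q + q⁻¹ ≠ 0 := by
  intro h
  apply hq2
  field_simp at h
  linear_combination h

section OrthogonalIdempotents

variable {ι R : Type*} {s : Finset ι} {F : ι → R}

theorem eq_of_forall_mul_mul_eq [Semiring R] (hF : ∑ i ∈ s, F i = 1) {M N : R}
    (h : ∀ i ∈ s, ∀ j ∈ s, F i * M * F j = F i * N * F j) : M = N := by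
  have expand (X : R) : X = ∑ i ∈ s, ∑ j ∈ s, F i * X * F j := by
    calc X = (∑ i ∈ s, F i) * X * ∑ j ∈ s, F j := by rw [hF, one_mul, mul_one]
      _ = _ := by rw [sum_mul, sum_mul_sum]
  rw [expand M, expand N]
  exact sum_congr rfl fun i hi => sum_congr rfl fun j hj => h i hi j hj

variable {K : Type*} [CommSemiring K] [Semiring R] [Algebra K R] [DecidableEq ι]
  (hF : ∀ i ∈ s, ∀ j ∈ s, F i * F j = if i = j then F i else 0) (ϑ : ι → K) {i : ι}
include hF

theorem mul_sum_smul_of_orthogonal (hi : i ∈ s) :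
    F i * ∑ k ∈ s, ϑ k • F k = ϑ i • F i := by
  rw [mul_sum, sum_eq_single_of_mem i hi fun k hk hki => ?_]
  · rw [mul_smul_comm, hF i hi i hi, if_pos rfl]
  · rw [mul_smul_comm, hF i hi k hk, if_neg hki.symm, smul_zero]

theorem sum_smul_mul_of_orthogonal (hi : i ∈ s) :
    (∑ k ∈ s, ϑ k • F k) * F i = ϑ i • F i := by
  rw [sum_mul, sum_eq_single_of_mem i hi fun k hk hki => ?_]
  · rw [smul_mul_assoc, hF i hi i hi, if_pos rfl]
  · rw [smul_mul_assoc, hF k hk i hi, if_neg hki, smul_zero]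

end OrthogonalIdempotents

theorem mul_askeyWilson_key_mul {K R : Type*} [Field K] [Ring R] [Algebra K R]
    {σ β q a b : K} {P Q Z E F : R} (hEP : E * P = a • E) (hPF : P * F = b • F) :
    E * (σ ^ 2 • Q + σ • (q • (P * Z) - q⁻¹ • (Z * P)) - β • (P * Q * P) + P * P * Q
      + Q * P * P) * F
      = (σ ^ 2 - β * a * b + a ^ 2 + b ^ 2) • (E * Q * F)
        + (σ * (q * a - q⁻¹ * b)) • (E * Z * F) := by
  have hPF' (X : R) : X * P * F = b • (X * F) := by rw [mul_assoc, hPF, mul_smul_comm]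
  simp only [mul_add, add_mul, mul_sub, sub_mul, mul_smul_comm, smul_mul_assoc, ← mul_assoc,
    hEP, hPF']
  module

theorem askeyWilson_key_of_tridiagonal {K R : Type*} [Field K] [Ring R] [Algebra K R]
    {s : Finset ℤ} {F : ℤ → R} (hFsum : ∑ i ∈ s, F i = 1)
    (hFmul : ∀ i ∈ s, ∀ j ∈ s, F i * F j = if i = j then F i else 0)
    {q : K} (hq : q ≠ 0) (ht : q + q⁻¹ ≠ 0) {ϑ : ℤ → K}
    (hϑ : ∀ i j : ℤ, |i - j| = 1 →
      ϑ i ^ 2 + ϑ j ^ 2 + (q ^ 2 - q⁻¹ ^ 2) ^ 2 = (q ^ 2 + q⁻¹ ^ 2) * ϑ i * ϑ j)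
    {P Q Z : R} (hP : P = ∑ k ∈ s, ϑ k • F k)
    (hQ : ∀ i ∈ s, ∀ j ∈ s, 1 < |i - j| → F i * Q * F j = 0)
    (hZ : ∀ i ∈ s, F i * Z = (1 + ϑ i / (q + q⁻¹)) • (F i * Q * F i)) :
    (q ^ 2 - q⁻¹ ^ 2) ^ 2 • Q + (q ^ 2 - q⁻¹ ^ 2) • (q • (P * Z) - q⁻¹ • (Z * P))
      - (q ^ 2 + q⁻¹ ^ 2) • (P * Q * P) + P * P * Q + Q * P * P = (q ^ 2 - q⁻¹ ^ 2) ^ 2 • Z := by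
  refine eq_of_forall_mul_mul_eq hFsum fun i hi j hj => ?_
  have hFZF : F i * Z * F j = if i = j then (1 + ϑ i / (q + q⁻¹)) • (F i * Q * F i) else 0 := by
    rw [hZ i hi, smul_mul_assoc, mul_assoc, hFmul i hi j hj]
    split_ifs <;> simp
  rw [mul_askeyWilson_key_mul (hP ▸ mul_sum_smul_of_orthogonal hFmul ϑ hi)
    (hP ▸ sum_smul_mul_of_orthogonal hFmul ϑ hj), mul_smul_comm, smul_mul_assoc, hFZF]
  split_ifs with hij
  · subst hij
    match_scalars
    linear_combination askeyWilson_diagonal_identity (t := ϑ i) hq ht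
  · rcases lt_or_eq_of_le (Int.one_le_abs (sub_ne_zero.mpr hij)) with hfar | hnear
    · simp [hQ i hi j hj hfar]
    · have hcoeff : (q ^ 2 - q⁻¹ ^ 2) ^ 2 - (q ^ 2 + q⁻¹ ^ 2) * ϑ i * ϑ j + ϑ i ^ 2 + ϑ j ^ 2
          = 0 := by
        linear_combination hϑ i j hnear.symm
      simp only [hcoeff, zero_smul, smul_zero, add_zero]

section Relations

open MulOpposite

variable {K R : Type*} [Field K] [Ring R] [Algebra K R] {q s : K} {P Q Z C : R}

theorem askeyWilson_relation_of_key (hq : q ≠ 0) (hs : s ≠ 0)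
    (hkey : s ^ 2 • Q + s • (q • (P * Z) - q⁻¹ • (Z * P)) - (q ^ 2 + q⁻¹ ^ 2) • (P * Q * P)
      + P * P * Q + Q * P * P = s ^ 2 • Z)
    (hC : C = Z - s⁻¹ • (q • (Q * P) - q⁻¹ • (P * Q))) :
    Q + s⁻¹ • (q • (P * C) - q⁻¹ • (C * P)) = Z := by
  subst hC
  apply smul_right_injective R (pow_ne_zero 2 hs)
  dsimp only
  rw [← hkey]
  simp only [mul_sub, sub_mul, smul_sub, smul_add, mul_smul_comm, smul_mul_assoc, smul_smul,
    mul_assoc]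
  match_scalars <;> field_simp
  ring

theorem askeyWilson_relation_of_key_of_commute (hq : q ≠ 0) (hs : s ≠ 0) (hPZ : Commute P Z)
    (hkey : s ^ 2 • Q + s • (q • (P * Z) - q⁻¹ • (Z * P)) - (q ^ 2 + q⁻¹ ^ 2) • (P * Q * P)
      + P * P * Q + Q * P * P = s ^ 2 • Z)
    (hC : C = Z - s⁻¹ • (q • (P * Q) - q⁻¹ • (Q * P))) :
    Q + s⁻¹ • (q • (C * P) - q⁻¹ • (P * C)) = Z := by
  apply op_injective
  have key_op := congrArg op hkey
  simp only [op_add, op_sub, op_smul, op_mul] at key_op ⊢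
  refine askeyWilson_relation_of_key hq hs ?_ (by simp only [hC, op_sub, op_smul, op_mul])
  rw [← key_op, hPZ.op.eq]
  simp only [mul_assoc]
  abel

end Relations

theorem z3_symmetric_askey_wilson_general
    {X : Type*} [Fintype X] [DecidableEq X]
    (D : ℤ) (q a : ℂ) (hq : q ≠ 0) (ha : a ≠ 0)
    (hq1 : q ^ 2 ≠ 1) (hq2 : q ^ 2 ≠ -1)
    (ϑ : ℤ → ℂ)
    (hϑ : ∀ i : ℤ, ϑ i = a * q ^ (2 * i - D) + a⁻¹ * q ^ (D - 2 * i))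
    (E Estar : ℤ → Matrix X X ℂ)
    (hEsum : ∑ i ∈ Finset.Icc (0 : ℤ) D, E i = 1)
    (hEmul : ∀ i ∈ Finset.Icc (0 : ℤ) D, ∀ j ∈ Finset.Icc (0 : ℤ) D,
      E i * E j = if i = j then E i else 0)
    (hEssum : ∑ i ∈ Finset.Icc (0 : ℤ) D, Estar i = 1)
    (hEsmul : ∀ i ∈ Finset.Icc (0 : ℤ) D, ∀ j ∈ Finset.Icc (0 : ℤ) D,
      Estar i * Estar j = if i = j then Estar i else 0)
    (A B : Matrix X X ℂ)
    (hA : A = ∑ i ∈ Finset.Icc (0 : ℤ) D, ϑ i • E i)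
    (hB : B = ∑ i ∈ Finset.Icc (0 : ℤ) D, ϑ i • Estar i)
    (htriE : ∀ i ∈ Finset.Icc (0 : ℤ) D, ∀ j ∈ Finset.Icc (0 : ℤ) D,
      1 < |i - j| → E i * B * E j = 0)
    (htriEs : ∀ i ∈ Finset.Icc (0 : ℤ) D, ∀ j ∈ Finset.Icc (0 : ℤ) D,
      1 < |i - j| → Estar i * A * Estar j = 0)
    (Z : Matrix X X ℂ)
    (hZE : ∀ i ∈ Finset.Icc (0 : ℤ) D,
      Z * E i = (1 + ϑ i / (q + q⁻¹)) • (E i * B * E i) ∧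
      E i * Z = (1 + ϑ i / (q + q⁻¹)) • (E i * B * E i))
    (hZEs : ∀ i ∈ Finset.Icc (0 : ℤ) D,
      Z * Estar i = (1 + ϑ i / (q + q⁻¹)) • (Estar i * A * Estar i) ∧
      Estar i * Z = (1 + ϑ i / (q + q⁻¹)) • (Estar i * A * Estar i))
    (C : Matrix X X ℂ)
    (hC : C = Z - (q ^ (2 : ℤ) - q ^ (-2 : ℤ))⁻¹ • (q • (A * B) - q⁻¹ • (B * A))) :
    (A + (q ^ (2 : ℤ) - q ^ (-2 : ℤ))⁻¹ • (q • (B * C) - q⁻¹ • (C * B)) = Z) ∧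
    (B + (q ^ (2 : ℤ) - q ^ (-2 : ℤ))⁻¹ • (q • (C * A) - q⁻¹ • (A * C)) = Z) := by
  have hs := sq_sub_inv_sq_ne_zero hq hq1 hq2
  have ht := add_inv_ne_zero hq hq2
  have hϑ_adj (i j : ℤ) (hij : |i - j| = 1) := theta_sq_add_theta_sq_of_adjacent hq ha hϑ hij
  have hkeyB := askeyWilson_key_of_tridiagonal hEssum hEsmul hq ht hϑ_adj hB htriEs
    fun i hi => (hZEs i hi).2
  have hkeyA := askeyWilson_key_of_tridiagonal hEsum hEmul hq ht hϑ_adj hA htriE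
    fun i hi => (hZE i hi).2
  have hAZ : Commute A Z := hA ▸ Commute.sum_left _ _ _ fun i hi =>
    Commute.smul_left ((hZE i hi).2.trans (hZE i hi).1.symm) (ϑ i)
  have hzpow : q ^ (2 : ℤ) - q ^ (-2 : ℤ) = q ^ 2 - q⁻¹ ^ 2 := by simp
  rw [hzpow] at hC ⊢
  exact ⟨askeyWilson_relation_of_key hq hs hkeyB hC,
    askeyWilson_relation_of_key_of_commute hq hs hAZ hkeyA hC⟩

theorem z3_symmetric_askey_wilson
    {X : Type*} [Fintype X] [DecidableEq X] [Nonempty X]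
    (D : ℤ) (hD : 3 ≤ D) (q a : ℂ) (hq : q ≠ 0) (ha : a ≠ 0)
    (hq1 : q ^ 2 ≠ 1) (hq2 : q ^ 2 ≠ -1)
    (ϑ : ℤ → ℂ)
    (hϑ : ∀ i : ℤ, ϑ i = a * q ^ (2 * i - D) + a⁻¹ * q ^ (D - 2 * i))
    (β : ℂ) (hβ : β = q ^ (2 : ℤ) + q ^ (-2 : ℤ))
    (E Estar : ℤ → Matrix X X ℂ)
    (hEsum : ∑ i ∈ Finset.Icc (0 : ℤ) D, E i = 1)
    (hEmul : ∀ i ∈ Finset.Icc (0 : ℤ) D, ∀ j ∈ Finset.Icc (0 : ℤ) D,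
      E i * E j = if i = j then E i else 0)
    (hEssum : ∑ i ∈ Finset.Icc (0 : ℤ) D, Estar i = 1)
    (hEsmul : ∀ i ∈ Finset.Icc (0 : ℤ) D, ∀ j ∈ Finset.Icc (0 : ℤ) D,
      Estar i * Estar j = if i = j then Estar i else 0)
    (A B : Matrix X X ℂ)
    (hA : A = ∑ i ∈ Finset.Icc (0 : ℤ) D, ϑ i • E i)
    (hB : B = ∑ i ∈ Finset.Icc (0 : ℤ) D, ϑ i • Estar i)
    (htriE : ∀ i ∈ Finset.Icc (0 : ℤ) D, ∀ j ∈ Finset.Icc (0 : ℤ) D,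
      1 < |i - j| → E i * B * E j = 0)
    (htriEs : ∀ i ∈ Finset.Icc (0 : ℤ) D, ∀ j ∈ Finset.Icc (0 : ℤ) D,
      1 < |i - j| → Estar i * A * Estar j = 0)
    (Z : Matrix X X ℂ)
    (hZE : ∀ i ∈ Finset.Icc (0 : ℤ) D,
      Z * E i = (1 + ϑ i / (q + q⁻¹)) • (E i * B * E i) ∧
      E i * Z = (1 + ϑ i / (q + q⁻¹)) • (E i * B * E i))
    (hZEs : ∀ i ∈ Finset.Icc (0 : ℤ) D,
      Z * Estar i = (1 + ϑ i / (q + q⁻¹)) • (Estar i * A * Estar i) ∧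
      Estar i * Z = (1 + ϑ i / (q + q⁻¹)) • (Estar i * A * Estar i))
    (C : Matrix X X ℂ)
    (hC : C = Z - (q ^ (2 : ℤ) - q ^ (-2 : ℤ))⁻¹ • (q • (A * B) - q⁻¹ • (B * A))) :
    (A + (q ^ (2 : ℤ) - q ^ (-2 : ℤ))⁻¹ • (q • (B * C) - q⁻¹ • (C * B)) = Z) ∧
    (B + (q ^ (2 : ℤ) - q ^ (-2 : ℤ))⁻¹ • (q • (C * A) - q⁻¹ • (A * C)) = Z) :=
  z3_symmetric_askey_wilson_general D q a hq ha hq1 hq2 ϑ hϑ E Estar hEsum hEmul hEssum hEsmul A B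
    hA hB htriE htriEs Z hZE hZEs C hC
end

section
/- Let W = Σ_{i=0}^D α_i·E_i with all α_i ≠ 0, and assume the matrices E_i·B·E_j with 0 ≤ i,j ≤ D and |i−j| = 1 are linearly independent. Then W^{−1}·B·W = C if and only if α_i = α_0·(−1)^i·a^{−i}·q^{i(D−i)} for 0 ≤ i ≤ D (equivalently, α_i/α_{i−1} = −a^{−1}·q^{D−2i+1} for 1 ≤ i ≤ D). -/
/-
Conjugation by `W = ∑ αᵢ Eᵢ` multiplies the block `Eᵢ B Eⱼ` by `αᵢ⁻¹ αⱼ`, while `C` acts on that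
block as the scalar `1` if `i = j` (there `Z` contributes `1 + ϑᵢ / (q + q⁻¹)` and the
`q`-commutator `ϑᵢ / (q + q⁻¹)`) and as `-(q ϑᵢ - q⁻¹ ϑⱼ) / (q² - q⁻²)` otherwise. Blocks with
`|i - j| > 1` vanish, so by linear independence of the remaining blocks `W⁻¹ B W = C` says exactly
that `αᵢ⁻¹ αⱼ` equals this scalar whenever `|i - j| = 1`. For `ϑᵢ = a q^(2i-D) + a⁻¹ q^(D-2i)` the
scalar at `(i - 1, i)` is `-a⁻¹ q^(D-2i+1)` and the one at `(i, i - 1)` is its inverse, so both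
conditions read `αᵢ / αᵢ₋₁ = -a⁻¹ q^(D-2i+1)`, whose solutions are `α₀ (-1)ⁱ a⁻ⁱ q^(i(D-i))`.
-/

open Finset

section Scalars

variable {K : Type*} [Field K] {q : K}

theorem sub_inv_ne_zero_of_sq_ne_one (hq : q ≠ 0) (hq1 : q ^ 2 ≠ 1) : q - q⁻¹ ≠ 0 := by
  intro h
  refine hq1 ?_
  field_simp at h
  linear_combination h

theorem add_inv_ne_zero_of_sq_ne_neg_one (hq : q ≠ 0) (hq2 : q ^ 2 ≠ -1) : q + q⁻¹ ≠ 0 := by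
  intro h
  refine hq2 ?_
  field_simp at h
  linear_combination h

theorem zpow_two_sub_zpow_neg_two (hq : q ≠ 0) :
    q ^ (2 : ℤ) - q ^ (-2 : ℤ) = (q - q⁻¹) * (q + q⁻¹) := by
  rw [zpow_neg, zpow_ofNat]
  field_simp
  ring

theorem zpow_two_sub_zpow_neg_two_ne_zero (hq : q ≠ 0) (hq1 : q ^ 2 ≠ 1) (hq2 : q ^ 2 ≠ -1) :
    q ^ (2 : ℤ) - q ^ (-2 : ℤ) ≠ 0 := by
  rw [zpow_two_sub_zpow_neg_two hq]
  exact mul_ne_zero (sub_inv_ne_zero_of_sq_ne_one hq hq1) (add_inv_ne_zero_of_sq_ne_neg_one hq hq2)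

theorem inv_zpow_two_sub_zpow_neg_two_mul (hq : q ≠ 0) (hq1 : q ^ 2 ≠ 1) (t : K) :
    (q ^ (2 : ℤ) - q ^ (-2 : ℤ))⁻¹ * (q * t - q⁻¹ * t) = t / (q + q⁻¹) := by
  rw [zpow_two_sub_zpow_neg_two hq, ← sub_mul, mul_inv, mul_comm (q - q⁻¹)⁻¹, mul_assoc,
    inv_mul_cancel_left₀ (sub_inv_ne_zero_of_sq_ne_one hq hq1), div_eq_inv_mul]

end Scalars

section OrthogonalIdempotents

variable {K A ι : Type*} [Field K] [Ring A] [Algebra K A] {s : Finset ι} {E : ι → A}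

theorem eq_sum_sum_mul_mul (hsum : ∑ i ∈ s, E i = 1) (M : A) :
    M = ∑ i ∈ s, ∑ j ∈ s, E i * M * E j := by
  conv_lhs => rw [← one_mul M, ← mul_one (1 * M), ← hsum]
  rw [sum_mul, sum_mul]
  simp only [mul_sum]

theorem sum_smul_mul_mul_sum_smul (f g : ι → K) (M : A) :
    (∑ i ∈ s, f i • E i) * M * ∑ j ∈ s, g j • E j =
      ∑ i ∈ s, ∑ j ∈ s, (f i * g j) • (E i * M * E j) := by
  rw [sum_mul, sum_mul]
  simp only [mul_sum]
  exact sum_congr rfl fun i _ => sum_congr rfl fun j _ => by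
    rw [smul_mul_assoc, smul_mul_assoc, mul_smul_comm, smul_smul]

variable [DecidableEq ι]

theorem mul_sum_smul_of_orthogonal_s8 (hE : ∀ i ∈ s, ∀ j ∈ s, E i * E j = if i = j then E i else 0)
    (f : ι → K) {i : ι} (hi : i ∈ s) : E i * ∑ j ∈ s, f j • E j = f i • E i := by
  rw [mul_sum, sum_eq_single_of_mem i hi fun j hj hji => ?_]
  · rw [mul_smul_comm, hE i hi i hi, if_pos rfl]
  · rw [mul_smul_comm, hE i hi j hj, if_neg hji.symm, smul_zero]

theorem sum_smul_mul_of_orthogonal_s8 (hE : ∀ i ∈ s, ∀ j ∈ s, E i * E j = if i = j then E i else 0)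
    (f : ι → K) {j : ι} (hj : j ∈ s) : (∑ i ∈ s, f i • E i) * E j = f j • E j := by
  rw [sum_mul, sum_eq_single_of_mem j hj fun i hi hij => ?_]
  · rw [smul_mul_assoc, hE j hj j hj, if_pos rfl]
  · rw [smul_mul_assoc, hE i hi j hj, if_neg hij, smul_zero]

theorem sum_smul_mul_sum_smul (hE : ∀ i ∈ s, ∀ j ∈ s, E i * E j = if i = j then E i else 0)
    (f g : ι → K) : (∑ i ∈ s, f i • E i) * ∑ j ∈ s, g j • E j = ∑ i ∈ s, (f i * g i) • E i := by
  rw [mul_sum]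
  refine sum_congr rfl fun i hi => ?_
  rw [mul_smul_comm, sum_smul_mul_of_orthogonal_s8 hE f hi, smul_smul, mul_comm]

theorem mul_sum_smul_mul_mul_of_orthogonal
    (hE : ∀ i ∈ s, ∀ j ∈ s, E i * E j = if i = j then E i else 0) (ϑ : ι → K) (M : A)
    {i j : ι} (hi : i ∈ s) : E i * ((∑ k ∈ s, ϑ k • E k) * M) * E j = ϑ i • (E i * M * E j) := by
  rw [← mul_assoc, mul_sum_smul_of_orthogonal_s8 hE ϑ hi, smul_mul_assoc, smul_mul_assoc]

theorem mul_mul_sum_smul_mul_of_orthogonal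
    (hE : ∀ i ∈ s, ∀ j ∈ s, E i * E j = if i = j then E i else 0) (ϑ : ι → K) (M : A)
    {i j : ι} (hj : j ∈ s) : E i * (M * ∑ k ∈ s, ϑ k • E k) * E j = ϑ j • (E i * M * E j) := by
  rw [mul_assoc, mul_assoc M, sum_smul_mul_of_orthogonal_s8 hE ϑ hj, mul_smul_comm, mul_smul_comm,
    ← mul_assoc]

end OrthogonalIdempotents

theorem Matrix.inv_sum_smul {K n ι : Type*} [Field K] [Fintype n] [DecidableEq n] [DecidableEq ι]
    {s : Finset ι} {E : ι → Matrix n n K} (hsum : ∑ i ∈ s, E i = 1)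
    (hE : ∀ i ∈ s, ∀ j ∈ s, E i * E j = if i = j then E i else 0) {α : ι → K}
    (hα : ∀ i ∈ s, α i ≠ 0) : (∑ i ∈ s, α i • E i)⁻¹ = ∑ i ∈ s, (α i)⁻¹ • E i := by
  refine Matrix.inv_eq_right_inv ?_
  rw [sum_smul_mul_sum_smul hE, ← hsum]
  exact sum_congr rfl fun i hi => by rw [mul_inv_cancel₀ (hα i hi), one_smul]

theorem sum_smul_eq_sum_smul_iff_of_linearIndependent {K V κ : Type*} [Ring K] [AddCommGroup V]
    [Module K V] {t : Finset κ} {Q : κ → Prop} {v : κ → V} {x y : κ → K}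
    (hv : LinearIndependent K fun p : Subtype Q => v p) (hQt : ∀ p, Q p → p ∈ t)
    (hoff : ∀ p ∈ t, ¬Q p → x p • v p = y p • v p) :
    ∑ p ∈ t, x p • v p = ∑ p ∈ t, y p • v p ↔ ∀ p, Q p → x p = y p := by
  classical
  have hsub : ∑ p ∈ t, (x p • v p - y p • v p) = ∑ p ∈ t.subtype Q, (x p - y p) • v p := by
    rw [sum_subtype_eq_sum_filter (fun p => (x p - y p) • v p), sum_filter]
    refine sum_congr rfl fun p hp => ?_
    split_ifs with hQ
    · rw [sub_smul]
    · rw [hoff p hp hQ, sub_self]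
  rw [← sub_eq_zero, ← sum_sub_distrib, hsub]
  refine ⟨fun h p hp => sub_eq_zero.mp ?_, fun h => sum_eq_zero fun p _ => ?_⟩
  · exact linearIndependent_iff'.mp hv _ (fun p => x p - y p) h ⟨p, hp⟩
      (mem_subtype.mpr (hQt p hp))
  · rw [h p p.2, sub_self, zero_smul]

section BlockCoefficients

variable {K A ι : Type*} [Field K] [Ring A] [Algebra K A] [DecidableEq ι]

def blockCoeff (q : K) (ϑ : ι → K) (i j : ι) : K :=
  if i = j then 1 else -((q ^ (2 : ℤ) - q ^ (-2 : ℤ))⁻¹ * (q * ϑ i - q⁻¹ * ϑ j))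

variable {s : Finset ι} {E : ι → A}

theorem mul_mul_eq_blockCoeff_smul {q : K} (hq : q ≠ 0) (hq1 : q ^ 2 ≠ 1) {ϑ : ι → K}
    (hE : ∀ i ∈ s, ∀ j ∈ s, E i * E j = if i = j then E i else 0) {B Z : A}
    (hZ : ∀ i ∈ s, E i * Z = (1 + ϑ i / (q + q⁻¹)) • (E i * B * E i)) {i j : ι}
    (hi : i ∈ s) (hj : j ∈ s) :
    E i * (Z - (q ^ (2 : ℤ) - q ^ (-2 : ℤ))⁻¹ •
        (q • ((∑ k ∈ s, ϑ k • E k) * B) - q⁻¹ • (B * ∑ k ∈ s, ϑ k • E k))) * E j =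
      blockCoeff q ϑ i j • (E i * B * E j) := by
  have hZij : E i * Z * E j = if i = j then (1 + ϑ i / (q + q⁻¹)) • (E i * B * E j) else 0 := by
    rw [hZ i hi, smul_mul_assoc, mul_assoc (E i * B), hE i hi j hj]
    split_ifs with h
    · rw [h]
    · rw [mul_zero, smul_zero]
  simp only [mul_sub, sub_mul, mul_smul_comm, smul_mul_assoc, hZij,
    mul_sum_smul_mul_mul_of_orthogonal hE ϑ B hi, mul_mul_sum_smul_mul_of_orthogonal hE ϑ B hj]
  rw [blockCoeff]
  split_ifs with h
  · subst h
    rw [← inv_zpow_two_sub_zpow_neg_two_mul hq hq1]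
    module
  · module

end BlockCoefficients

section Theta

variable {K : Type*} [Field K] {q a : K} {D : ℤ} {ϑ : ℤ → K}

theorem mul_theta_pred_sub (hq : q ≠ 0)
    (hϑ : ∀ i : ℤ, ϑ i = a * q ^ (2 * i - D) + a⁻¹ * q ^ (D - 2 * i)) (i : ℤ) :
    q * ϑ (i - 1) - q⁻¹ * ϑ i = a⁻¹ * q ^ (D - 2 * i + 1) * (q ^ (2 : ℤ) - q ^ (-2 : ℤ)) := by
  simp only [hϑ, mul_sub, mul_one, zpow_sub₀ hq, zpow_add₀ hq, zpow_mul, zpow_one]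
  field_simp
  ring

theorem mul_theta_sub_pred (ha : a ≠ 0) (hq : q ≠ 0)
    (hϑ : ∀ i : ℤ, ϑ i = a * q ^ (2 * i - D) + a⁻¹ * q ^ (D - 2 * i)) (i : ℤ) :
    q * ϑ i - q⁻¹ * ϑ (i - 1) = a * q ^ (2 * i - D - 1) * (q ^ (2 : ℤ) - q ^ (-2 : ℤ)) := by
  simp only [hϑ, mul_sub, mul_one, zpow_sub₀ hq, zpow_mul]
  field_simp
  ring

theorem neg_one_zpow_mul_zpow_mul_zpow_eq_prev_mul (ha : a ≠ 0) (hq : q ≠ 0) (i : ℤ) :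
    (-1 : K) ^ i * a ^ (-i) * q ^ (i * (D - i)) =
      (-1 : K) ^ (i - 1) * a ^ (-(i - 1)) * q ^ ((i - 1) * (D - (i - 1))) *
        -(a⁻¹ * q ^ (D - 2 * i + 1)) := by
  have hq' : q ^ (i * (D - i)) = q ^ ((i - 1) * (D - (i - 1))) * q ^ (D - 2 * i + 1) := by
    rw [← zpow_add₀ hq]
    ring_nf
  rw [hq', zpow_sub_one₀ (by norm_num : (-1 : K) ≠ 0), neg_sub, zpow_sub₀ ha, zpow_one, zpow_neg]
  field_simp

theorem blockCoeff_pred_self (hq : q ≠ 0) (hq1 : q ^ 2 ≠ 1) (hq2 : q ^ 2 ≠ -1)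
    (hϑ : ∀ i : ℤ, ϑ i = a * q ^ (2 * i - D) + a⁻¹ * q ^ (D - 2 * i)) (i : ℤ) :
    blockCoeff q ϑ (i - 1) i = -(a⁻¹ * q ^ (D - 2 * i + 1)) := by
  rw [blockCoeff, if_neg (by omega), mul_theta_pred_sub hq hϑ, mul_comm,
    mul_inv_cancel_right₀ (zpow_two_sub_zpow_neg_two_ne_zero hq hq1 hq2)]

theorem blockCoeff_self_pred (ha : a ≠ 0) (hq : q ≠ 0) (hq1 : q ^ 2 ≠ 1) (hq2 : q ^ 2 ≠ -1)
    (hϑ : ∀ i : ℤ, ϑ i = a * q ^ (2 * i - D) + a⁻¹ * q ^ (D - 2 * i)) (i : ℤ) :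
    blockCoeff q ϑ i (i - 1) = (-(a⁻¹ * q ^ (D - 2 * i + 1)))⁻¹ := by
  rw [blockCoeff, if_neg (by omega), mul_theta_sub_pred ha hq hϑ, mul_comm,
    mul_inv_cancel_right₀ (zpow_two_sub_zpow_neg_two_ne_zero hq hq1 hq2), inv_neg, mul_inv,
    inv_inv, ← zpow_neg]
  ring_nf

end Theta

theorem inv_sum_smul_mul_mul_sum_smul_eq_iff {K n : Type*} [Field K] [Fintype n] [DecidableEq n]
    {s : Finset ℤ} {E : ℤ → Matrix n n K} (hsum : ∑ i ∈ s, E i = 1)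
    (hE : ∀ i ∈ s, ∀ j ∈ s, E i * E j = if i = j then E i else 0) {B C : Matrix n n K}
    (htri : ∀ i ∈ s, ∀ j ∈ s, 1 < |i - j| → E i * B * E j = 0)
    (hind : LinearIndependent K fun p : {p : ℤ × ℤ // p.1 ∈ s ∧ p.2 ∈ s ∧ |p.1 - p.2| = 1} =>
      E p.val.1 * B * E p.val.2)
    {c : ℤ → ℤ → K} (hc : ∀ i, c i i = 1)
    (hC : ∀ i ∈ s, ∀ j ∈ s, E i * C * E j = c i j • (E i * B * E j))
    {α : ℤ → K} (hα : ∀ i ∈ s, α i ≠ 0) :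
    (∑ i ∈ s, α i • E i)⁻¹ * B * (∑ i ∈ s, α i • E i) = C ↔
      ∀ p : ℤ × ℤ, p.1 ∈ s ∧ p.2 ∈ s ∧ |p.1 - p.2| = 1 → (α p.1)⁻¹ * α p.2 = c p.1 p.2 := by
  have hCsum : C = ∑ p ∈ s ×ˢ s, c p.1 p.2 • (E p.1 * B * E p.2) := by
    rw [sum_product' (f := fun i j => c i j • (E i * B * E j)), eq_sum_sum_mul_mul hsum C]
    exact sum_congr rfl fun i hi => sum_congr rfl fun j hj => hC i hi j hj
  rw [Matrix.inv_sum_smul hsum hE hα, sum_smul_mul_mul_sum_smul, ← sum_product' (f := fun i j =>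
    ((α i)⁻¹ * α j) • (E i * B * E j)), hCsum]
  refine sum_smul_eq_sum_smul_iff_of_linearIndependent hind
    (fun p hp => mem_product.mpr ⟨hp.1, hp.2.1⟩) fun p hp hQ => ?_
  rw [mem_product] at hp
  rcases eq_or_ne p.1 p.2 with h | h
  · rw [h, hc, inv_mul_cancel₀ (hα _ hp.2)]
  · have hne : |p.1 - p.2| ≠ 1 := fun h1 => hQ ⟨hp.1, hp.2, h1⟩
    rw [htri _ hp.1 _ hp.2 ((Int.one_le_abs (sub_ne_zero.mpr h)).lt_of_ne hne.symm), smul_zero,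
      smul_zero]

theorem forall_adjacent_inv_mul_eq_iff {K : Type*} [Field K] {D : ℤ} {α r : ℤ → K}
    {c : ℤ → ℤ → K} (hup : ∀ i, c (i - 1) i = r i) (hdown : ∀ i, c i (i - 1) = (r i)⁻¹) :
    (∀ p : ℤ × ℤ, p.1 ∈ Icc 0 D ∧ p.2 ∈ Icc 0 D ∧ |p.1 - p.2| = 1 →
      (α p.1)⁻¹ * α p.2 = c p.1 p.2) ↔ ∀ i, 1 ≤ i → i ≤ D → α i / α (i - 1) = r i := by
  constructor
  · intro h i h1 hD
    rw [← hup, ← h (i - 1, i) ⟨by simp; omega, by simp; omega, by simp⟩, inv_mul_eq_div]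
  · rintro h ⟨i, j⟩ ⟨hi, hj, hij⟩
    simp only [mem_Icc] at hi hj
    rcases (abs_eq zero_le_one).mp hij with hij | hij
    · obtain rfl : j = i - 1 := by omega
      rw [hdown, ← h i (by omega) (by omega), inv_div, inv_mul_eq_div]
    · obtain rfl : i = j - 1 := by omega
      rw [hup, ← h j (by omega) (by omega), inv_mul_eq_div]

theorem forall_eq_mul_iff_forall_div_pred_eq {K : Type*} [Field K] {D : ℤ} {α f r : ℤ → K}
    (hα : ∀ i ∈ Icc 0 D, α i ≠ 0) (hf0 : f 0 = 1) (hf : ∀ i, f i = f (i - 1) * r i) :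
    (∀ i ∈ Icc 0 D, α i = α 0 * f i) ↔ ∀ i, 1 ≤ i → i ≤ D → α i / α (i - 1) = r i := by
  constructor
  · intro h i h1 hD
    rw [div_eq_iff (hα _ (mem_Icc.mpr ⟨by omega, by omega⟩)), h i (mem_Icc.mpr ⟨by omega, hD⟩),
      h (i - 1) (mem_Icc.mpr ⟨by omega, by omega⟩), hf i]
    ring
  · intro h i hi
    rw [mem_Icc] at hi
    obtain ⟨h0, hD⟩ := hi
    induction i, h0 using Int.leInduction with
    | base => rw [hf0, mul_one]
    | succ n hn ih =>
      have hstep := h (n + 1) (by omega) hD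
      rw [add_sub_cancel_right, div_eq_iff (hα n (mem_Icc.mpr ⟨hn, by omega⟩))] at hstep
      rw [hstep, ih (by omega), hf (n + 1), add_sub_cancel_right]
      ring

theorem intertwiner_characterization_M_general
    {X : Type*} [Fintype X] [DecidableEq X]
    (D : ℤ) (q a : ℂ) (hq : q ≠ 0) (ha : a ≠ 0)
    (hq1 : q ^ 2 ≠ 1) (hq2 : q ^ 2 ≠ -1)
    (ϑ : ℤ → ℂ)
    (hϑ : ∀ i : ℤ, ϑ i = a * q ^ (2 * i - D) + a⁻¹ * q ^ (D - 2 * i))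
    (E : ℤ → Matrix X X ℂ)
    (hEsum : ∑ i ∈ Finset.Icc (0 : ℤ) D, E i = 1)
    (hEmul : ∀ i ∈ Finset.Icc (0 : ℤ) D, ∀ j ∈ Finset.Icc (0 : ℤ) D,
      E i * E j = if i = j then E i else 0)
    (B : Matrix X X ℂ)
    (htriE : ∀ i ∈ Finset.Icc (0 : ℤ) D, ∀ j ∈ Finset.Icc (0 : ℤ) D,
      1 < |i - j| → E i * B * E j = 0)
    (A : Matrix X X ℂ)
    (hA : A = ∑ i ∈ Finset.Icc (0 : ℤ) D, ϑ i • E i)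
    (Z : Matrix X X ℂ)
    (hZE : ∀ i ∈ Finset.Icc (0 : ℤ) D,
      Z * E i = (1 + ϑ i / (q + q⁻¹)) • (E i * B * E i) ∧
      E i * Z = (1 + ϑ i / (q + q⁻¹)) • (E i * B * E i))
    (C : Matrix X X ℂ)
    (hC : C = Z - (q ^ (2 : ℤ) - q ^ (-2 : ℤ))⁻¹ • (q • (A * B) - q⁻¹ • (B * A)))
    (α : ℤ → ℂ) (hα : ∀ i ∈ Finset.Icc (0 : ℤ) D, α i ≠ 0)
    (W : Matrix X X ℂ)
    (hW : W = ∑ i ∈ Finset.Icc (0 : ℤ) D, α i • E i)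
    (hind : LinearIndependent ℂ
      (fun p : {p : ℤ × ℤ // p.1 ∈ Finset.Icc (0 : ℤ) D ∧
          p.2 ∈ Finset.Icc (0 : ℤ) D ∧ |p.1 - p.2| = 1} =>
        E p.val.1 * B * E p.val.2)) :
    (W⁻¹ * B * W = C ↔
      ∀ i ∈ Finset.Icc (0 : ℤ) D,
        α i = α 0 * (-1 : ℂ) ^ i * a ^ (-i) * q ^ (i * (D - i))) ∧
    ((∀ i ∈ Finset.Icc (0 : ℤ) D,
        α i = α 0 * (-1 : ℂ) ^ i * a ^ (-i) * q ^ (i * (D - i))) ↔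
      ∀ i : ℤ, 1 ≤ i → i ≤ D →
        α i / α (i - 1) = -(a⁻¹ * q ^ (D - 2 * i + 1))) := by
  have hratio : (∀ i ∈ Icc (0 : ℤ) D, α i = α 0 * (-1 : ℂ) ^ i * a ^ (-i) * q ^ (i * (D - i))) ↔
      ∀ i : ℤ, 1 ≤ i → i ≤ D → α i / α (i - 1) = -(a⁻¹ * q ^ (D - 2 * i + 1)) := by
    simpa only [mul_assoc] using forall_eq_mul_iff_forall_div_pred_eq hα
      (f := fun i => (-1 : ℂ) ^ i * a ^ (-i) * q ^ (i * (D - i))) (by simp)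
      (neg_one_zpow_mul_zpow_mul_zpow_eq_prev_mul ha hq)
  subst hW hC hA
  rw [inv_sum_smul_mul_mul_sum_smul_eq_iff hEsum hEmul htriE hind (fun i => if_pos rfl)
    (fun i hi j hj => mul_mul_eq_blockCoeff_smul hq hq1 hEmul (fun i hi => (hZE i hi).2) hi hj) hα,
    forall_adjacent_inv_mul_eq_iff (blockCoeff_pred_self hq hq1 hq2 hϑ)
      (blockCoeff_self_pred ha hq hq1 hq2 hϑ)]
  exact ⟨hratio.symm, hratio⟩

theorem intertwiner_characterization_M
    {X : Type*} [Fintype X] [DecidableEq X] [Nonempty X]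
    (D : ℤ) (hD : 3 ≤ D) (q a : ℂ) (hq : q ≠ 0) (ha : a ≠ 0)
    (hq1 : q ^ 2 ≠ 1) (hq2 : q ^ 2 ≠ -1)
    (ϑ : ℤ → ℂ)
    (hϑ : ∀ i : ℤ, ϑ i = a * q ^ (2 * i - D) + a⁻¹ * q ^ (D - 2 * i))
    (β : ℂ) (hβ : β = q ^ (2 : ℤ) + q ^ (-2 : ℤ))
    (E : ℤ → Matrix X X ℂ)
    (hEsum : ∑ i ∈ Finset.Icc (0 : ℤ) D, E i = 1)
    (hEmul : ∀ i ∈ Finset.Icc (0 : ℤ) D, ∀ j ∈ Finset.Icc (0 : ℤ) D,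
      E i * E j = if i = j then E i else 0)
    (B : Matrix X X ℂ)
    (htriE : ∀ i ∈ Finset.Icc (0 : ℤ) D, ∀ j ∈ Finset.Icc (0 : ℤ) D,
      1 < |i - j| → E i * B * E j = 0)
    (A : Matrix X X ℂ)
    (hA : A = ∑ i ∈ Finset.Icc (0 : ℤ) D, ϑ i • E i)
    (Z : Matrix X X ℂ)
    (hZE : ∀ i ∈ Finset.Icc (0 : ℤ) D,
      Z * E i = (1 + ϑ i / (q + q⁻¹)) • (E i * B * E i) ∧
      E i * Z = (1 + ϑ i / (q + q⁻¹)) • (E i * B * E i))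
    (C : Matrix X X ℂ)
    (hC : C = Z - (q ^ (2 : ℤ) - q ^ (-2 : ℤ))⁻¹ • (q • (A * B) - q⁻¹ • (B * A)))
    (α : ℤ → ℂ) (hα : ∀ i ∈ Finset.Icc (0 : ℤ) D, α i ≠ 0)
    (W : Matrix X X ℂ)
    (hW : W = ∑ i ∈ Finset.Icc (0 : ℤ) D, α i • E i)
    (hind : LinearIndependent ℂ
      (fun p : {p : ℤ × ℤ // p.1 ∈ Finset.Icc (0 : ℤ) D ∧
          p.2 ∈ Finset.Icc (0 : ℤ) D ∧ |p.1 - p.2| = 1} =>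
        E p.val.1 * B * E p.val.2)) :
    (W⁻¹ * B * W = C ↔
      ∀ i ∈ Finset.Icc (0 : ℤ) D,
        α i = α 0 * (-1 : ℂ) ^ i * a ^ (-i) * q ^ (i * (D - i))) ∧
    ((∀ i ∈ Finset.Icc (0 : ℤ) D,
        α i = α 0 * (-1 : ℂ) ^ i * a ^ (-i) * q ^ (i * (D - i))) ↔
      ∀ i : ℤ, 1 ≤ i → i ≤ D →
        α i / α (i - 1) = -(a⁻¹ * q ^ (D - 2 * i + 1))) :=
  intertwiner_characterization_M_general D q a hq ha hq1 hq2 ϑ hϑ E hEsum hEmul B htriE A hA Z hZE C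
    hC α hα W hW hind
end

section
/- The braid relation holds: W·W*·W = W*·W·W*. -/
/-!
Put `M = W W*`. Conjugating the intertwining relation gives `B M = M A`. Sandwiching this between
`E*_j` and `E_i` yields `ϑ_j E*_j M E_i = ϑ_i E*_j M E_i`, so `M` is block diagonal:
`E*_j M E_i = 0` for `i ≠ j`. A block-diagonal `M` intertwines `∑ c_i E*_i` with `∑ c_i E_i` for
every choice of scalars `c`, not only for `c = ϑ`; taking `c_i = f τ_i` gives `W* M = M W`, which is
the braid relation.
-/

open Matrix

theorem CompleteOrthogonalIdempotents.of_finset {R ι : Type*} [Semiring R] [DecidableEq ι]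
    {s : Finset ι} {F : ι → R}
    (hmul : ∀ i ∈ s, ∀ j ∈ s, F i * F j = if i = j then F i else 0)
    (hsum : ∑ i ∈ s, F i = 1) :
    CompleteOrthogonalIdempotents fun i : s ↦ F i where
  toOrthogonalIdempotents :=
    OrthogonalIdempotents.iff_mul_eq.2 fun i j ↦ by
      rw [hmul i i.2 j j.2]
      exact if_congr Subtype.ext_iff.symm rfl rfl
  complete := (Finset.sum_coe_sort s F).trans hsum

theorem Matrix.semiconjBy_mul_of_inv_mul_mul_eq {n R : Type*} [Fintype n] [DecidableEq n]
    [CommRing R] {A B W V : Matrix n n R} (hW : IsUnit W.det) (hV : IsUnit V.det)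
    (h : W⁻¹ * B * W = V * A * V⁻¹) : SemiconjBy (W * V) A B := by
  unfold SemiconjBy
  calc W * V * A = W * (V * A * V⁻¹) * V := by
        simp only [mul_assoc, nonsing_inv_mul _ hV, mul_one]
    _ = B * (W * V) := by simp only [← h, ← mul_assoc, mul_nonsing_inv _ hW, one_mul]

namespace OrthogonalIdempotents

variable {K R I : Type*} [CommSemiring K] [Semiring R] [Algebra K R] [Fintype I] {e : I → R}

theorem mul_sum_smul (he : OrthogonalIdempotents e) (c : I → K) (j : I) :
    e j * ∑ i, c i • e i = c j • e j := by
  classical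
  simp [Finset.mul_sum, he.mul_eq]

theorem sum_smul_mul (he : OrthogonalIdempotents e) (c : I → K) (j : I) :
    (∑ i, c i • e i) * e j = c j • e j := by
  classical
  simp [Finset.sum_mul, he.mul_eq]

theorem sum_smul_mul_sum_smul (he : OrthogonalIdempotents e) (a b : I → K) :
    (∑ i, a i • e i) * ∑ i, b i • e i = ∑ i, (a i * b i) • e i := by
  simp only [Finset.sum_mul, smul_mul_assoc, he.mul_sum_smul, smul_smul]

end OrthogonalIdempotents

namespace OrthogonalIdempotents

variable {K R I : Type*} [Field K] [Ring R] [Algebra K R] [Fintype I] {e g : I → R}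

theorem mul_mul_eq_zero_of_semiconjBy (he : OrthogonalIdempotents e)
    (hg : OrthogonalIdempotents g) {θ : I → K} (hθ : θ.Injective)
    {m : R} (hm : SemiconjBy m (∑ i, θ i • e i) (∑ i, θ i • g i))
    {i j : I} (hij : i ≠ j) : g j * m * e i = 0 := by
  have h : θ j • (g j * m * e i) = θ i • (g j * m * e i) :=
    calc θ j • (g j * m * e i) = g j * ((∑ k, θ k • g k) * m) * e i := by
          rw [← mul_assoc (g j), hg.mul_sum_smul, smul_mul_assoc, smul_mul_assoc]
      _ = g j * (m * ∑ k, θ k • e k) * e i := by rw [hm.eq]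
      _ = θ i • (g j * m * e i) := by
          rw [mul_assoc, mul_assoc, he.sum_smul_mul, mul_smul_comm, mul_smul_comm, mul_assoc]
  rw [← sub_eq_zero, ← sub_smul] at h
  exact (smul_eq_zero.1 h).resolve_left (sub_ne_zero.2 (hθ.ne hij.symm))

end OrthogonalIdempotents

namespace CompleteOrthogonalIdempotents

variable {R I : Type*} [Fintype I] {e g : I → R} {m : R}

section Semiring

variable [Semiring R]

theorem mul_eq_mul_mul_self (he : CompleteOrthogonalIdempotents e)
    (hoff : ∀ i j, i ≠ j → g j * m * e i = 0) (j : I) : g j * m = g j * m * e j := by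
  classical
  calc g j * m = ∑ i, g j * m * e i := by rw [← Finset.mul_sum, he.complete, mul_one]
    _ = g j * m * e j := Finset.sum_eq_single j (fun i _ hij ↦ hoff i j hij) (by simp)

theorem mul_self_eq_mul_mul (hg : CompleteOrthogonalIdempotents g)
    (hoff : ∀ i j, i ≠ j → g j * m * e i = 0) (i : I) : m * e i = g i * m * e i := by
  classical
  calc m * e i = ∑ j, g j * m * e i := by
        rw [← Finset.sum_mul, ← Finset.sum_mul, hg.complete, one_mul]
    _ = g i * m * e i := Finset.sum_eq_single i (fun j _ hji ↦ hoff i j hji.symm) (by simp)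

end Semiring

variable {K : Type*} [Field K] [Ring R] [Algebra K R]

theorem sum_smul_mul_sum_inv_smul (he : CompleteOrthogonalIdempotents e)
    {c : I → K} (hc : ∀ i, c i ≠ 0) : (∑ i, c i • e i) * ∑ i, (c i)⁻¹ • e i = 1 := by
  simp only [he.sum_smul_mul_sum_smul, mul_inv_cancel₀ (hc _), one_smul, he.complete]

theorem semiconjBy_sum_smul (he : CompleteOrthogonalIdempotents e)
    (hg : CompleteOrthogonalIdempotents g) {θ : I → K} (hθ : θ.Injective)
    (hm : SemiconjBy m (∑ i, θ i • e i) (∑ i, θ i • g i)) (c : I → K) :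
    SemiconjBy m (∑ i, c i • e i) (∑ i, c i • g i) := by
  have hoff : ∀ i j, i ≠ j → g j * m * e i = 0 := fun _ _ ↦
    he.toOrthogonalIdempotents.mul_mul_eq_zero_of_semiconjBy hg.toOrthogonalIdempotents hθ hm
  calc m * ∑ i, c i • e i = ∑ i, c i • (g i * m * e i) := by
        simp only [Finset.mul_sum, mul_smul_comm, hg.mul_self_eq_mul_mul hoff]
    _ = (∑ i, c i • g i) * m := by
        simp only [Finset.sum_mul, smul_mul_assoc, ← he.mul_eq_mul_mul_self hoff]

end CompleteOrthogonalIdempotents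

theorem braid_relation_WWstar_general
    {X : Type*} [Fintype X] [DecidableEq X]
    (D : ℤ)
    (ϑ : ℤ → ℂ)
    (hϑ : ∀ i ∈ Finset.Icc (0 : ℤ) D, ∀ j ∈ Finset.Icc (0 : ℤ) D,
      ϑ i = ϑ j → i = j)
    (f : ℂ) (hf : f ≠ 0)
    (τ : ℤ → ℂ) (hτ : ∀ i ∈ Finset.Icc (0 : ℤ) D, τ i ≠ 0)
    (E Estar : ℤ → Matrix X X ℂ)
    (hEsum : ∑ i ∈ Finset.Icc (0 : ℤ) D, E i = 1)
    (hEmul : ∀ i ∈ Finset.Icc (0 : ℤ) D, ∀ j ∈ Finset.Icc (0 : ℤ) D,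
      E i * E j = if i = j then E i else 0)
    (hEssum : ∑ i ∈ Finset.Icc (0 : ℤ) D, Estar i = 1)
    (hEsmul : ∀ i ∈ Finset.Icc (0 : ℤ) D, ∀ j ∈ Finset.Icc (0 : ℤ) D,
      Estar i * Estar j = if i = j then Estar i else 0)
    (A B W Wstar : Matrix X X ℂ)
    (hA : A = ∑ i ∈ Finset.Icc (0 : ℤ) D, ϑ i • E i)
    (hB : B = ∑ i ∈ Finset.Icc (0 : ℤ) D, ϑ i • Estar i)
    (hW : W = f • ∑ i ∈ Finset.Icc (0 : ℤ) D, τ i • E i)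
    (hWstar : Wstar = f • ∑ i ∈ Finset.Icc (0 : ℤ) D, τ i • Estar i)
    (hint : W⁻¹ * B * W = Wstar * A * Wstar⁻¹)
    :
    W * Wstar * W = Wstar * W * Wstar := by
  set s := Finset.Icc (0 : ℤ) D
  have hE := CompleteOrthogonalIdempotents.of_finset hEmul hEsum
  have hEs := CompleteOrthogonalIdempotents.of_finset hEsmul hEssum
  have hϑs : Function.Injective fun i : s ↦ ϑ i := fun i j h ↦ Subtype.ext (hϑ i i.2 j j.2 h)
  have hfτ : ∀ i : s, f * τ i ≠ 0 := fun i ↦ mul_ne_zero hf (hτ i i.2)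
  have expand (F : ℤ → Matrix X X ℂ) : f • ∑ i ∈ s, τ i • F i = ∑ i : s, (f * τ i) • F i := by
    rw [Finset.smul_sum, ← Finset.sum_coe_sort]
    simp only [smul_smul]
  rw [expand] at hW hWstar
  rw [← Finset.sum_coe_sort] at hA hB
  have hWdet : IsUnit W.det :=
    isUnit_det_of_right_inverse (hW ▸ hE.sum_smul_mul_sum_inv_smul hfτ)
  have hWsdet : IsUnit Wstar.det :=
    isUnit_det_of_right_inverse (hWstar ▸ hEs.sum_smul_mul_sum_inv_smul hfτ)
  have hM := Matrix.semiconjBy_mul_of_inv_mul_mul_eq hWdet hWsdet hint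
  rw [hA, hB] at hM
  have braid := hE.semiconjBy_sum_smul hEs hϑs hM fun i ↦ f * τ i
  rw [← hW, ← hWstar] at braid
  simpa only [SemiconjBy, mul_assoc] using braid

theorem braid_relation_WWstar
    {X : Type*} [Fintype X] [DecidableEq X] [Nonempty X]
    (D : ℤ) (hD : 3 ≤ D)
    (ϑ : ℤ → ℂ)
    (hϑ : ∀ i ∈ Finset.Icc (0 : ℤ) D, ∀ j ∈ Finset.Icc (0 : ℤ) D,
      ϑ i = ϑ j → i = j)
    (f : ℂ) (hf : f ≠ 0)
    (τ : ℤ → ℂ) (hτ : ∀ i ∈ Finset.Icc (0 : ℤ) D, τ i ≠ 0)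
    (E Estar : ℤ → Matrix X X ℂ)
    (hEsymm : ∀ i ∈ Finset.Icc (0 : ℤ) D, (E i).IsSymm)
    (hEssymm : ∀ i ∈ Finset.Icc (0 : ℤ) D, (Estar i).IsSymm)
    (hEsum : ∑ i ∈ Finset.Icc (0 : ℤ) D, E i = 1)
    (hEmul : ∀ i ∈ Finset.Icc (0 : ℤ) D, ∀ j ∈ Finset.Icc (0 : ℤ) D,
      E i * E j = if i = j then E i else 0)
    (hEssum : ∑ i ∈ Finset.Icc (0 : ℤ) D, Estar i = 1)
    (hEsmul : ∀ i ∈ Finset.Icc (0 : ℤ) D, ∀ j ∈ Finset.Icc (0 : ℤ) D,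
      Estar i * Estar j = if i = j then Estar i else 0)
    (A B W Wstar : Matrix X X ℂ)
    (hA : A = ∑ i ∈ Finset.Icc (0 : ℤ) D, ϑ i • E i)
    (hB : B = ∑ i ∈ Finset.Icc (0 : ℤ) D, ϑ i • Estar i)
    (hW : W = f • ∑ i ∈ Finset.Icc (0 : ℤ) D, τ i • E i)
    (hWstar : Wstar = f • ∑ i ∈ Finset.Icc (0 : ℤ) D, τ i • Estar i)
    (hint : W⁻¹ * B * W = Wstar * A * Wstar⁻¹)
    :
    W * Wstar * W = Wstar * W * Wstar :=
  braid_relation_WWstar_general D ϑ hϑ f hf τ hτ E Estar hEsum hEmul hEssum hEsmul A B W Wstar hA hB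
    hW hWstar hint
end
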